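/- arXiv:2005.10319 — 2 statements merged into one kernel-verified Lean document; each statement's English description precedes it below -/
import Mathlib

section
/- Let T be a tree, v ∈ V(T), and k ≥ 2 an integer. Then every Steiner k-ecc v-tree contains (as a subgraph) a longest path of T starting at v, i.e., a path of length ecc_2(v,T) with endpoint v. -/
open SimpleGraph

/-- The Steiner distance of a set `S` of vertices of `G`: the minimum number of edges of a
connected subgraph of `G` whose vertex set contains `S`. -/
noncomputable def steinerDist {V : Type} [Fintype V] (G : SimpleGraph V) (S : Set V) : ℕ :=
  sInf {n | ∃ H : G.Subgraph, H.Connected ∧ S ⊆ H.verts ∧ H.edgeSet.ncard = n}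

/-- The Steiner `k`-eccentricity of a vertex `v` of `G`. -/
noncomputable def steinerEcc {V : Type} [Fintype V] (G : SimpleGraph V) (k : ℕ) (v : V) : ℕ :=
  sSup {d | ∃ S : Finset V, v ∈ S ∧ S.card = k ∧ steinerDist G ↑S = d}

/-- The standard eccentricity `ecc_2(v, G)`: the maximum distance from `v` to a vertex. -/
noncomputable def ecc2 {V : Type} [Fintype V] (G : SimpleGraph V) (v : V) : ℕ :=
  Finset.univ.sup (fun u => G.dist v u)

/-- The distance from a vertex `u` to a set `A` of vertices. -/
noncomputable def distToSet {V : Type} (G : SimpleGraph V) (u : V) (A : Set V) : ℕ :=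
  sInf ((G.dist u) '' A)

/-- The eccentricity of a set `A` of vertices (e.g. of a subgraph such as a path):
the maximum over all vertices `u` of the distance from `u` to `A`. -/
noncomputable def eccOfSet {V : Type} [Fintype V] (G : SimpleGraph V) (A : Set V) : ℕ :=
  Finset.univ.sup (fun u => distToSet G u A)

/-!
In a tree, the Steiner distance of a set `S ∋ v` is the number of edges in the union of the
paths from `v` to the vertices of `S`, and every connected subgraph containing `S` contains all
these paths. So it suffices that some `s ∈ S` is at distance `ecc_2(v)` from `v`. If not, take an
eccentric vertex `x`, let `w` be the last vertex of the `v`–`x` path lying on the union, and let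
`ℓ ≠ v` be a vertex of `S` whose path passes through `w`. The `v`–`x` path shares with the paths
to `S \ {ℓ}` only edges of the `v`–`ℓ` path, and it is longer, so exchanging `ℓ` for `x` strictly
enlarges the union, contradicting the maximality of `d(S)`.
-/

namespace SimpleGraph

variable {V : Type*} {G : SimpleGraph V}

theorem IsAcyclic.mk_mem_edges_of_adj (hG : G.IsAcyclic) {a c u w : V} {p : G.Walk a c}
    (hp : p.IsPath) (hu : u ∈ p.support) (hw : w ∈ p.support) (hadj : G.Adj u w) :
    s(u, w) ∈ p.edges := by
  classical
  have of_mem_takeUntil : ∀ {u w : V} (hu : u ∈ p.support) (hw : w ∈ p.support),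
      G.Adj u w → u ∈ (p.takeUntil w hw).support → s(u, w) ∈ p.edges := by
    intro u w hu hw hadj h
    apply p.edges_takeUntil_subset_edges hw
    rw [hG.path_concat (hp.takeUntil hu) (hp.takeUntil hw) hadj h, Walk.edges_concat]
    simp
  by_cases h : u ∈ (p.takeUntil w hw).support
  · exact of_mem_takeUntil hu hw hadj h
  · rw [Sym2.eq_swap]
    exact of_mem_takeUntil hw hu hadj.symm
      (hG.mem_support_of_ne_mem_support_of_adj_of_isPath (hp.takeUntil hu) (hp.takeUntil hw)
        hadj h)

namespace IsTree

variable (hG : G.IsTree)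

noncomputable def path (a b : V) : G.Walk a b :=
  (hG.existsUnique_path a b).choose

theorem isPath_path (a b : V) : (hG.path a b).IsPath :=
  (hG.existsUnique_path a b).choose_spec.1

theorem eq_path_of_isPath {a b : V} {p : G.Walk a b} (hp : p.IsPath) : p = hG.path a b :=
  (hG.existsUnique_path a b).choose_spec.2 p hp

theorem length_path (a b : V) : (hG.path a b).length = G.dist a b := by
  obtain ⟨p, hp, hlen⟩ := hG.connected.exists_path_of_dist a b
  rw [← hG.eq_path_of_isPath hp, hlen]

theorem path_takeUntil [DecidableEq V] {a c u : V} (hu : u ∈ (hG.path a c).support) :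
    (hG.path a c).takeUntil u hu = hG.path a u :=
  hG.eq_path_of_isPath ((hG.isPath_path a c).takeUntil hu)

theorem path_dropUntil [DecidableEq V] {a c u : V} (hu : u ∈ (hG.path a c).support) :
    (hG.path a c).dropUntil u hu = hG.path u c :=
  hG.eq_path_of_isPath ((hG.isPath_path a c).dropUntil hu)

theorem dist_add_dist_of_mem_support_path {a c u : V} (hu : u ∈ (hG.path a c).support) :
    G.dist a u + G.dist u c = G.dist a c := by
  classical
  rw [← hG.length_path a u, ← hG.length_path u c, ← hG.length_path a c,
    ← hG.path_takeUntil hu, ← hG.path_dropUntil hu, ← Walk.length_append, Walk.take_spec]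

theorem support_path_subset {a c w : V} (hw : w ∈ (hG.path a c).support) :
    (hG.path a w).support ⊆ (hG.path a c).support := by
  classical
  rw [← hG.path_takeUntil hw]
  exact Walk.support_takeUntil_subset_support _ hw

theorem edges_path_subset {a c w : V} (hw : w ∈ (hG.path a c).support) :
    (hG.path a w).edges ⊆ (hG.path a c).edges := by
  classical
  rw [← hG.path_takeUntil hw]
  exact Walk.edges_takeUntil_subset_edges _ hw

theorem mem_support_path_of_dist_le {a c u w : V} (hu : u ∈ (hG.path a c).support)
    (hw : w ∈ (hG.path a c).support) (hle : G.dist a u ≤ G.dist a w) :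
    u ∈ (hG.path a w).support := by
  classical
  have hsplit : u ∈ ((hG.path a c).takeUntil w hw).support ∨
      u ∈ ((hG.path a c).dropUntil w hw).support := by
    rw [← Walk.mem_support_append_iff, Walk.take_spec]
    exact hu
  rw [hG.path_takeUntil hw, hG.path_dropUntil hw] at hsplit
  rcases hsplit with h | h
  · exact h
  · have hacu := hG.dist_add_dist_of_mem_support_path hu
    have hacw := hG.dist_add_dist_of_mem_support_path hw
    have hwcu := hG.dist_add_dist_of_mem_support_path h
    have hwu : G.dist w u = 0 := by omega
    rw [(hG.connected w u).dist_eq_zero_iff] at hwu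
    exact hwu ▸ Walk.end_mem_support _

theorem edges_path_subset_edgeSet {H : G.Subgraph} (hH : H.Preconnected) {a b : V}
    (ha : a ∈ H.verts) (hb : b ∈ H.verts) {e : Sym2 V} (he : e ∈ (hG.path a b).edges) :
    e ∈ H.edgeSet := by
  classical
  obtain ⟨p, hpH⟩ := (Subgraph.preconnected_iff_forall_exists_walk_subgraph H).mp hH ha hb
  rw [← hG.eq_path_of_isPath p.bypass_isPath] at he
  exact Subgraph.edgeSet_mono hpH (p.mem_edges_toSubgraph.mpr (p.edges_bypass_subset_edges he))

end IsTree

theorem Subgraph.connected_finset_sup {ι : Type*} {A : Finset ι}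
    {f : ι → G.Subgraph} {v : V} (hA : A.Nonempty) (hf : ∀ i ∈ A, (f i).Connected)
    (hv : ∀ i ∈ A, v ∈ (f i).verts) : (A.sup f).Connected := by
  induction hA using Finset.Nonempty.cons_induction with
  | singleton i => simpa using hf i (Finset.mem_singleton_self i)
  | cons i A hi hA ih =>
    simp only [Finset.mem_cons, forall_eq_or_imp] at hf hv
    rw [Finset.sup_cons]
    obtain ⟨j, hj⟩ := hA
    exact connected_sup hf.1.preconnected (ih hf.2 hv.2).preconnected
      ⟨v, hv.1, Subgraph.verts_mono (Finset.le_sup hj) (hv.2 j hj)⟩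

end SimpleGraph

theorem steinerDist_le_card_sym2 {V : Type} [Fintype V] (G : SimpleGraph V) (S : Set V) :
    steinerDist G S ≤ Nat.card (Sym2 V) := by
  rcases Set.eq_empty_or_nonempty
      {n | ∃ H : G.Subgraph, H.Connected ∧ S ⊆ H.verts ∧ H.edgeSet.ncard = n} with h | h
  · simp [steinerDist, h]
  · obtain ⟨H, -, -, hH⟩ := Nat.sInf_mem h
    rw [steinerDist, ← hH]
    exact Set.ncard_le_card _

theorem steinerDist_le_steinerEcc {V : Type} [Fintype V] (G : SimpleGraph V) {v : V}
    {S : Finset V} (hv : v ∈ S) : steinerDist G S ≤ steinerEcc G S.card v := by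
  refine le_csSup ⟨Nat.card (Sym2 V), ?_⟩ ⟨S, hv, rfl, rfl⟩
  rintro _ ⟨T, -, -, rfl⟩
  exact steinerDist_le_card_sym2 G T

namespace SimpleGraph

namespace IsTree

variable {V : Type} {G : SimpleGraph V} (hG : G.IsTree) [DecidableEq V]

noncomputable def pathEdges (v : V) (A : Finset V) : Finset (Sym2 V) :=
  A.biUnion fun s => (hG.path v s).edges.toFinset

theorem card_edges_path (a b : V) : (hG.path a b).edges.toFinset.card = G.dist a b := by
  rw [List.toFinset_card_of_nodup (hG.isPath_path a b).isTrail.edges_nodup, Walk.length_edges,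
    hG.length_path]

theorem card_pathEdges_insert (v y : V) (A : Finset V) :
    (hG.pathEdges v (insert y A)).card +
        ((hG.path v y).edges.toFinset ∩ hG.pathEdges v A).card =
      G.dist v y + (hG.pathEdges v A).card := by
  simp only [pathEdges, Finset.biUnion_insert]
  rw [Finset.card_union_add_card_inter, card_edges_path]

theorem steinerDist_eq_card_pathEdges [Fintype V] {v : V} {A : Finset V} (hv : v ∈ A) :
    steinerDist G A = (hG.pathEdges v A).card := by
  set K := A.sup fun s => (hG.path v s).toSubgraph
  have hK : (hG.pathEdges v A).card ∈
      {n | ∃ H : G.Subgraph, H.Connected ∧ ↑A ⊆ H.verts ∧ H.edgeSet.ncard = n} := by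
    refine ⟨K, Subgraph.connected_finset_sup ⟨v, hv⟩ (fun s _ => Walk.toSubgraph_connected _)
      (fun s _ => Walk.start_mem_verts_toSubgraph _), fun s hs => ?_, ?_⟩
    · exact Subgraph.verts_mono (Finset.le_sup hs) (Walk.end_mem_verts_toSubgraph _)
    · rw [← Set.ncard_coe_finset]
      congr 1
      ext e
      simp [K, pathEdges, Finset.sup_eq_iSup]
  refine le_antisymm (Nat.sInf_le hK) (le_csInf ⟨_, hK⟩ ?_)
  rintro n ⟨H, hH, hAH, rfl⟩
  rw [← Set.ncard_coe_finset]
  refine Set.ncard_le_ncard (fun e he => ?_) (Set.toFinite _)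
  simp only [pathEdges, Finset.coe_biUnion, Set.mem_iUnion, List.mem_toFinset,
    Finset.mem_coe] at he
  obtain ⟨s, hs, he⟩ := he
  exact hG.edges_path_subset_edgeSet hH.preconnected (hAH hv) (hAH hs) he

theorem edges_path_inter_pathEdges_subset {v x w : V} {A : Finset V}
    (hw : w ∈ (hG.path v x).support)
    (hmax : ∀ u ∈ (hG.path v x).support, (∃ s ∈ A, u ∈ (hG.path v s).support) →
      G.dist v u ≤ G.dist v w) :
    (hG.path v x).edges.toFinset ∩ hG.pathEdges v A ⊆ (hG.path v w).edges.toFinset := by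
  intro e he
  simp only [pathEdges, Finset.mem_inter, Finset.mem_biUnion, List.mem_toFinset] at he ⊢
  obtain ⟨hex, s, hs, hes⟩ := he
  induction e using Sym2.ind with
  | _ a b =>
    have mem_path_w : ∀ u, u ∈ (hG.path v x).support → u ∈ (hG.path v s).support →
        u ∈ (hG.path v w).support := fun u hux hus =>
      hG.mem_support_path_of_dist_le hux hw (hmax u hux ⟨s, hs, hus⟩)
    exact hG.isAcyclic.mk_mem_edges_of_adj (hG.isPath_path v w)
      (mem_path_w a (Walk.fst_mem_support_of_mem_edges _ hex)
        (Walk.fst_mem_support_of_mem_edges _ hes))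
      (mem_path_w b (Walk.snd_mem_support_of_mem_edges _ hex)
        (Walk.snd_mem_support_of_mem_edges _ hes))
      ((hG.path v x).adj_of_mem_edges hex)

theorem exists_max_dist_mem_support_path (x : V) {v : V} {A : Finset V} (hv : v ∈ A) :
    ∃ w ∈ (hG.path v x).support, (∃ s ∈ A, w ∈ (hG.path v s).support) ∧
      ∀ u ∈ (hG.path v x).support, (∃ s ∈ A, u ∈ (hG.path v s).support) →
        G.dist v u ≤ G.dist v w := by
  obtain ⟨w, hw, hmax⟩ := Finset.exists_max_image ((hG.path v x).support.toFinset.filter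
    fun u => ∃ s ∈ A, u ∈ (hG.path v s).support) (G.dist v)
    ⟨v, Finset.mem_filter.2 ⟨List.mem_toFinset.2 (Walk.start_mem_support _), v, hv,
      Walk.start_mem_support _⟩⟩
  simp only [Finset.mem_filter, List.mem_toFinset] at hw hmax
  exact ⟨w, hw.1, hw.2, fun u hux hus => hmax u ⟨hux, hus⟩⟩

theorem exists_card_pathEdges_lt {v x : V} {A : Finset V} (hv : v ∈ A) (hA : 2 ≤ A.card)
    (hx : ∀ s ∈ A, G.dist v s < G.dist v x) :
    ∃ B : Finset V, v ∈ B ∧ B.card = A.card ∧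
      (hG.pathEdges v A).card < (hG.pathEdges v B).card := by
  obtain ⟨w, hwx, ⟨s₀, hs₀, hws₀⟩, hmax⟩ := hG.exists_max_dist_mem_support_path x hv
  -- `w` is where the path to `x` leaves the subtree spanned by `A`; the path to `ℓ` runs
  -- through `w`, so it covers every edge the path to `x` shares with the other paths.
  obtain ⟨ℓ, hℓ, hℓv, hwℓ⟩ : ∃ ℓ ∈ A, ℓ ≠ v ∧ w ∈ (hG.path v ℓ).support := by
    by_cases hwv : w = v
    · obtain ⟨ℓ, hℓ⟩ := (A.erase v).card_pos.mp (by rw [Finset.card_erase_of_mem hv]; omega)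
      exact ⟨ℓ, Finset.mem_of_mem_erase hℓ, Finset.ne_of_mem_erase hℓ,
        hwv ▸ Walk.start_mem_support _⟩
    · refine ⟨s₀, hs₀, ?_, hws₀⟩
      rintro rfl
      rw [← hG.eq_path_of_isPath Walk.IsPath.nil, Walk.support_nil, List.mem_singleton] at hws₀
      exact hwv hws₀
  have hxA : x ∉ A.erase ℓ := fun h => (hx x (Finset.mem_of_mem_erase h)).false
  refine ⟨insert x (A.erase ℓ), Finset.mem_insert_of_mem (Finset.mem_erase.2 ⟨hℓv.symm, hv⟩),
    by rw [Finset.card_insert_of_notMem hxA, Finset.card_erase_of_mem hℓ]; omega, ?_⟩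
  have hsub : (hG.path v x).edges.toFinset ∩ hG.pathEdges v (A.erase ℓ) ⊆
      (hG.path v ℓ).edges.toFinset ∩ hG.pathEdges v (A.erase ℓ) := by
    intro e he
    have hle : hG.pathEdges v (A.erase ℓ) ⊆ hG.pathEdges v A :=
      Finset.biUnion_subset_biUnion_of_subset_left _ (Finset.erase_subset ℓ A)
    have hew := hG.edges_path_inter_pathEdges_subset hwx hmax
      (Finset.inter_subset_inter_left hle he)
    simp only [Finset.mem_inter, List.mem_toFinset] at he hew ⊢
    exact ⟨hG.edges_path_subset hwℓ hew, he.2⟩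
  have hinsx := hG.card_pathEdges_insert v x (A.erase ℓ)
  have hinsℓ := hG.card_pathEdges_insert v ℓ (A.erase ℓ)
  rw [Finset.insert_erase hℓ] at hinsℓ
  have hcard_sub := Finset.card_le_card hsub
  have hℓx := hx ℓ hℓ
  omega

end IsTree

end SimpleGraph

theorem kEccTree_contains_longest_path_general {V : Type} [Fintype V] (G : SimpleGraph V)
    (hT : G.IsTree) (v : V) (k : ℕ) (hk : 2 ≤ k)
    (S : Finset V) (hvS : v ∈ S) (hcard : S.card = k)
    (hecc : steinerDist G ↑S = steinerEcc G k v)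
    (H : G.Subgraph) (hHc : H.Connected) (hHs : ↑S ⊆ H.verts) :
    ∃ (b : V) (P : G.Walk v b), P.IsPath ∧ P.length = ecc2 G v ∧
      ∀ e ∈ P.edges, e ∈ H.edgeSet := by
  classical
  obtain ⟨x, -, hx⟩ := Finset.univ.exists_mem_eq_sup ⟨v, Finset.mem_univ v⟩ (G.dist v)
  obtain ⟨s, hsS, hs⟩ : ∃ s ∈ S, G.dist v s = G.dist v x := by
    by_contra! hfar
    have hlt : ∀ s ∈ S, G.dist v s < G.dist v x := fun s hs =>
      lt_of_le_of_ne (hx ▸ Finset.le_sup (Finset.mem_univ s)) (hfar s hs)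
    obtain ⟨B, hvB, hBcard, hSB⟩ := hT.exists_card_pathEdges_lt hvS (hcard ▸ hk) hlt
    have hB := steinerDist_le_steinerEcc G hvB
    rw [hBcard, hcard, ← hecc, hT.steinerDist_eq_card_pathEdges hvB,
      hT.steinerDist_eq_card_pathEdges hvS] at hB
    omega
  exact ⟨s, hT.path v s, hT.isPath_path v s, by rw [hT.length_path, hs, ecc2, hx],
    fun e he => hT.edges_path_subset_edgeSet hHc.preconnected (hHs hvS) (hHs hsS) he⟩

/-- Lemma 2.6: every Steiner `k`-ecc `v`-tree of a tree `T` contains a longest path of `T`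
starting at `v`, i.e. a path from `v` of length `ecc_2(v,T)` all of whose edges lie in the
tree. -/
theorem kEccTree_contains_longest_path {V : Type} [Fintype V] (G : SimpleGraph V)
    (hT : G.IsTree) (v : V) (k : ℕ) (hk : 2 ≤ k)
    (S : Finset V) (hvS : v ∈ S) (hcard : S.card = k)
    (hecc : steinerDist G ↑S = steinerEcc G k v)
    (H : G.Subgraph) (hHc : H.Connected) (hHs : ↑S ⊆ H.verts)
    (hHe : H.edgeSet.ncard = steinerEcc G k v) :
    ∃ (b : V) (P : G.Walk v b), P.IsPath ∧ P.length = ecc2 G v ∧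
      ∀ e ∈ P.edges, e ∈ H.edgeSet :=
  kEccTree_contains_longest_path_general G hT v k hk S hvS hcard hecc H hHc hHs
end

section
/- Let v be a vertex of a tree T and let S = {v, x, y} be a Steiner 3-ecc v-set such that the v,x-path P in T is a longest path of T starting at v (its length is ecc_2(v,T)). Then d_T(y, P) = ecc_T(P), i.e., y is a vertex at maximum distance from the path P. -/
open SimpleGraph

/-!
In a tree the Steiner distance of `{v, x, u}` is `|P| + d(u, P)`, where `P` is the `v,x`-path:
the union of `P` with a shortest path from `u` to `P` is contained in every connected subgraph
containing `v`, `x` and `u`. Hence, with `v` and `x` fixed, the Steiner distance of `{v, x, u}`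
is maximised exactly by the vertices `u` farthest from `P`, and `y` must be one of them.
-/

namespace SimpleGraph

variable {V : Type} {G : SimpleGraph V}

lemma Walk.IsTrail.ncard_edgeSet {u v : V} {p : G.Walk u v} (hp : p.IsTrail) :
    p.edgeSet.ncard = p.length := by
  classical
  have hset : p.edgeSet = ↑p.edges.toFinset := by ext; simp [Walk.edgeSet]
  rw [hset, Set.ncard_coe_finset, List.toFinset_card_of_nodup hp.edges_nodup, Walk.length_edges]

lemma Walk.disjoint_edgeSet_of_forall_mem_support_eq {u w a b : V} {R : G.Walk u w} {P : G.Walk a b}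
    (hmeet : ∀ z ∈ R.support, z ∈ P.support → z = w) : Disjoint R.edgeSet P.edgeSet := by
  rw [Set.disjoint_left]
  intro e heR heP
  induction e with
  | _ c d =>
    have hc := hmeet c (R.fst_mem_support_of_mem_edges heR) (P.fst_mem_support_of_mem_edges heP)
    have hd := hmeet d (R.snd_mem_support_of_mem_edges heR) (P.snd_mem_support_of_mem_edges heP)
    subst hc hd
    exact G.loopless.irrefl _ (R.adj_of_mem_edges heR)

lemma Subgraph.Connected.exists_walk_toSubgraph_le {H : G.Subgraph} (hH : H.Connected)
    {a b : V} (ha : a ∈ H.verts) (hb : b ∈ H.verts) :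
    ∃ W : G.Walk a b, W.toSubgraph ≤ H := by
  obtain ⟨p⟩ := (Subgraph.connected_iff'.mp hH).preconnected ⟨a, ha⟩ ⟨b, hb⟩
  refine ⟨p.map H.hom, ?_⟩
  exact (Walk.toSubgraph_map H.hom p).trans_le
    ((Subgraph.map_mono le_top).trans (Subgraph.map_hom_top H).le)

lemma IsTree.toSubgraph_le_of_connected (hT : G.IsTree) {a b : V} {P : G.Walk a b}
    (hP : P.IsPath) {H : G.Subgraph} (hH : H.Connected) (ha : a ∈ H.verts) (hb : b ∈ H.verts) :
    P.toSubgraph ≤ H := by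
  classical
  obtain ⟨W, hW⟩ := hH.exists_walk_toSubgraph_le ha hb
  have hPW : P = W.bypass := congrArg Subtype.val
    ((hT.isAcyclic.subsingleton_path a b).elim ⟨P, hP⟩ ⟨W.bypass, W.bypass_isPath⟩)
  exact hPW ▸ Walk.toSubgraph_bypass_le_toSubgraph.trans hW

lemma distToSet_le_dist {u a : V} {A : Set V} (ha : a ∈ A) : distToSet G u A ≤ G.dist u a :=
  Nat.sInf_le ⟨a, ha, rfl⟩

lemma distToSet_eq_zero_of_mem {u : V} {A : Set V} (hu : u ∈ A) : distToSet G u A = 0 :=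
  Nat.sInf_eq_zero.mpr (Or.inl ⟨u, hu, dist_self⟩)

lemma Connected.exists_isPath_length_eq_distToSet (hG : G.Connected) (u : V) {A : Set V}
    (hA : A.Nonempty) : ∃ w ∈ A, ∃ R : G.Walk u w, R.IsPath ∧ R.length = distToSet G u A ∧
      ∀ z ∈ R.support, z ∈ A → z = w := by
  classical
  obtain ⟨w, hwA, hwd⟩ : distToSet G u A ∈ G.dist u '' A := Nat.sInf_mem (hA.image _)
  obtain ⟨R, hRp, hRl⟩ := hG.exists_path_of_dist u w
  refine ⟨w, hwA, R, hRp, hRl.trans hwd, fun z hz hzA => ?_⟩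
  by_contra hzw
  have hsplit : (R.takeUntil z hz).length + (R.dropUntil z hz).length = R.length := by
    rw [← Walk.length_append, Walk.take_spec]
  have hdrop : (R.dropUntil z hz).length ≠ 0 := fun h0 => hzw (Walk.eq_of_length_eq_zero h0)
  have htake : distToSet G u A ≤ (R.takeUntil z hz).length :=
    (distToSet_le_dist hzA).trans (dist_le _)
  omega

variable [Fintype V]

lemma distToSet_le_eccOfSet (u : V) (A : Set V) : distToSet G u A ≤ eccOfSet G A :=
  Finset.le_sup (f := fun u => distToSet G u A) (Finset.mem_univ u)

lemma eccOfSet_le {A : Set V} {n : ℕ} (h : ∀ u, distToSet G u A ≤ n) : eccOfSet G A ≤ n :=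
  Finset.sup_le fun u _ => h u

lemma steinerDist_le_ncard_edgeSet {S : Set V} {H : G.Subgraph} (hH : H.Connected)
    (hS : S ⊆ H.verts) : steinerDist G S ≤ H.edgeSet.ncard :=
  Nat.sInf_le ⟨H, hH, hS, rfl⟩

lemma steinerDist_eq_ncard_edgeSet_of_forall_le {S : Set V} {K : G.Subgraph} (hK : K.Connected)
    (hS : S ⊆ K.verts) (hmin : ∀ H : G.Subgraph, H.Connected → S ⊆ H.verts → K ≤ H) :
    steinerDist G S = K.edgeSet.ncard := by
  refine le_antisymm (steinerDist_le_ncard_edgeSet hK hS) (le_csInf ⟨_, K, hK, hS, rfl⟩ ?_)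
  rintro n ⟨H, hH, hSH, rfl⟩
  exact Set.ncard_le_ncard (Subgraph.edgeSet_mono (hmin H hH hSH))

lemma steinerDist_le_card_sym2 (S : Set V) : steinerDist G S ≤ Nat.card (Sym2 V) := by
  obtain h | ⟨_, H, hH, hS, rfl⟩ := Set.eq_empty_or_nonempty
    {n | ∃ H : G.Subgraph, H.Connected ∧ S ⊆ H.verts ∧ H.edgeSet.ncard = n}
  · simp [steinerDist, h]
  · exact (steinerDist_le_ncard_edgeSet hH hS).trans (Set.ncard_le_card _)

lemma steinerDist_le_steinerEcc {k : ℕ} {v : V} {S : Finset V} (hv : v ∈ S) (hS : S.card = k) :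
    steinerDist G ↑S ≤ steinerEcc G k v := by
  refine le_csSup ⟨Nat.card (Sym2 V), ?_⟩ ⟨S, hv, hS, rfl⟩
  rintro d ⟨T, -, -, rfl⟩
  exact steinerDist_le_card_sym2 _

lemma IsTree.steinerDist_insert_insert_singleton (hT : G.IsTree) {v x : V} {P : G.Walk v x}
    (hP : P.IsPath) (u : V) :
    steinerDist G {v, x, u} = P.length + distToSet G u {z | z ∈ P.support} := by
  obtain ⟨w, hwP, R, hR, hRlen, hRmeet⟩ :=
    hT.connected.exists_isPath_length_eq_distToSet u (A := {z | z ∈ P.support})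
      ⟨v, P.start_mem_support⟩
  have hK : (P.toSubgraph ⊔ R.toSubgraph).Connected :=
    Subgraph.connected_sup P.toSubgraph_connected.preconnected
      R.toSubgraph_connected.preconnected
      ⟨w, P.mem_verts_toSubgraph.2 hwP, R.end_mem_verts_toSubgraph⟩
  have hS : ({v, x, u} : Set V) ⊆ (P.toSubgraph ⊔ R.toSubgraph).verts := by
    rintro z (rfl | rfl | rfl)
    · exact Or.inl P.start_mem_verts_toSubgraph
    · exact Or.inl P.end_mem_verts_toSubgraph
    · exact Or.inr R.start_mem_verts_toSubgraph
  rw [steinerDist_eq_ncard_edgeSet_of_forall_le hK hS, Subgraph.edgeSet_sup,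
    Walk.edgeSet_toSubgraph, Walk.edgeSet_toSubgraph,
    Set.ncard_union_eq (Walk.disjoint_edgeSet_of_forall_mem_support_eq hRmeet).symm,
    hP.isTrail.ncard_edgeSet, hR.isTrail.ncard_edgeSet, hRlen]
  intro H hH hSH
  have hPH := hT.toSubgraph_le_of_connected hP hH (hSH (by simp)) (hSH (by simp))
  have hwH : w ∈ H.verts := hPH.1 (P.mem_verts_toSubgraph.2 hwP)
  exact sup_le hPH (hT.toSubgraph_le_of_connected hR hH (hSH (by simp)) hwH)

end SimpleGraph

theorem third_terminal_property_general {V : Type} [Fintype V] [DecidableEq V] (G : SimpleGraph V)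
    (hT : G.IsTree) (v x y : V)
    (hcard : ({v, x, y} : Finset V).card = 3)
    (hecc : steinerDist G ↑({v, x, y} : Finset V) = steinerEcc G 3 v)
    (P : G.Walk v x) (hP : P.IsPath) :
    distToSet G y {z | z ∈ P.support} = eccOfSet G {z | z ∈ P.support} := by
  have hvx : v ≠ x := by
    rintro rfl
    rw [Finset.insert_eq_of_mem (Finset.mem_insert_self v _)] at hcard
    exact absurd (Finset.card_le_two (a := v) (b := y)) (by omega)
  refine le_antisymm (distToSet_le_eccOfSet y _) (eccOfSet_le fun u => ?_)
  by_cases hu : u ∈ P.support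
  · simp [distToSet_eq_zero_of_mem (A := {z | z ∈ P.support}) hu]
  have hcard_u : ({v, x, u} : Finset V).card = 3 := by
    have hvu : v ≠ u := fun h => hu (h ▸ P.start_mem_support)
    have hxu : x ≠ u := fun h => hu (h ▸ P.end_mem_support)
    rw [Finset.card_insert_of_notMem (by simp [hvx, hvu]),
      Finset.card_insert_of_notMem (by simp [hxu]), Finset.card_singleton]
  have hmax := steinerDist_le_steinerEcc (G := G) (Finset.mem_insert_self v _) hcard_u
  rw [← hecc] at hmax
  push_cast at hmax
  rw [hT.steinerDist_insert_insert_singleton hP, hT.steinerDist_insert_insert_singleton hP] at hmax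
  omega

/-- Lemma 2.7: let `v` be a vertex of a tree `T` and `S = {v, x, y}` a Steiner 3-ecc
`v`-set such that the `v,x`-path `P` is a longest path of `T` starting at `v`. Then
`d_T(y, P) = ecc_T(P)`. -/
theorem third_terminal_property {V : Type} [Fintype V] [DecidableEq V] (G : SimpleGraph V)
    (hT : G.IsTree) (v x y : V)
    (hcard : ({v, x, y} : Finset V).card = 3)
    (hecc : steinerDist G ↑({v, x, y} : Finset V) = steinerEcc G 3 v)
    (P : G.Walk v x) (hP : P.IsPath) (hPlen : P.length = ecc2 G v) :
    distToSet G y {z | z ∈ P.support} = eccOfSet G {z | z ∈ P.support} :=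
  third_terminal_property_general G hT v x y hcard hecc P hP
end
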